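/- arXiv:2007.09141 — 2 statements merged into one kernel-verified Lean document; each statement's English description precedes it below -/
import Mathlib

section
/- The suppression operation applied to a clustering S produces a k-anonymous relation, provided every cluster in S has at least k tuples: after replacing, within each cluster, every QI attribute on which the cluster's tuples disagree by the symbol ⋆, all tuples within a cluster agree on all QI attributes, hence every QI-group has size ≥ k. -/
/-- Suppressed version of tuple `t` belonging to cluster `C`: QI attributes
(in `Q`) on which the cluster's tuples disagree are replaced by `⋆` (here `none`). -/
def supTup {α V : Type*} [DecidableEq α] [DecidableEq V]
    (Q : Finset α) (C : Finset (α → V)) (t : α → V) : α → Option V :=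
  fun A => if A ∈ Q ∧ ∃ s ∈ C, s A ≠ t A then none else some (t A)

/-- The relation obtained by suppressing each cluster of the clustering `S`. -/
def suppress {α V : Type*} [DecidableEq α] [DecidableEq V]
    (Q : Finset α) (S : Finset (Finset (α → V))) : Multiset (α → Option V) :=
  ∑ C ∈ S, C.val.map (supTup Q C)

/-- Count of tuples of a suppressed relation with (ground) value `a` on `A`. -/
def cntO {α V : Type*} [DecidableEq V]
    (R : Multiset (α → Option V)) (A : α) (a : V) : ℕ :=
  (R.filter fun r => r A = some a).card

/-- Suppressed relation satisfies the diversity constraint `(A[a], lo, hi)`. -/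
def satO {α V : Type*} [DecidableEq V]
    (R : Multiset (α → Option V)) (A : α) (a : V) (lo hi : ℕ) : Prop :=
  lo ≤ cntO R A a ∧ cntO R A a ≤ hi

/-- `k`-anonymity of a suppressed relation w.r.t. QI attributes `Q`. -/
def kAnonO {α V : Type*} [DecidableEq α] [DecidableEq V]
    (R : Multiset (α → Option V)) (Q : Finset α) (k : ℕ) : Prop :=
  ∀ r ∈ R, k ≤ (R.filter fun s => ∀ A ∈ Q, s A = r A).card

private lemma supTup_agree {α V : Type*} [DecidableEq α] [DecidableEq V]
    (Q : Finset α) (C : Finset (α → V)) {t t' : α → V}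
    (ht : t ∈ C) (ht' : t' ∈ C) {A : α} (hA : A ∈ Q) :
    supTup Q C t' A = supTup Q C t A := by
  unfold supTup
  by_cases hall : ∀ s ∈ C, s A = t A
  · have h1 : ¬ (A ∈ Q ∧ ∃ s ∈ C, s A ≠ t A) := by
      rintro ⟨-, s, hs, hne⟩; exact hne (hall s hs)
    have h2 : ¬ (A ∈ Q ∧ ∃ s ∈ C, s A ≠ t' A) := by
      rintro ⟨-, s, hs, hne⟩
      exact hne ((hall s hs).trans (hall t' ht').symm)
    rw [if_neg h1, if_neg h2, hall t' ht']
  · push_neg at hall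
    obtain ⟨s, hs, hne⟩ := hall
    have h1 : A ∈ Q ∧ ∃ s ∈ C, s A ≠ t A := ⟨hA, s, hs, hne⟩
    have h2 : A ∈ Q ∧ ∃ s ∈ C, s A ≠ t' A := by
      refine ⟨hA, ?_⟩
      by_cases h : t' A = t A
      · exact ⟨s, hs, fun hc => hne (hc.trans h)⟩
      · exact ⟨t, ht, fun hc => h hc.symm⟩
    rw [if_pos h1, if_pos h2]

/-- Suppressing a clustering whose clusters are disjoint and of size `≥ k`
yields a `k`-anonymous relation. -/
theorem suppress_kAnonymous {α V : Type*} [DecidableEq α] [DecidableEq V]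
    (Q : Finset α) (S : Finset (Finset (α → V))) (k : ℕ)
    (hdisj : ∀ C ∈ S, ∀ C' ∈ S, C ≠ C' → Disjoint C C')
    (hsize : ∀ C ∈ S, k ≤ C.card) :
    kAnonO (suppress Q S) Q k := by
  intro r hr
  rw [suppress, Multiset.mem_sum] at hr
  obtain ⟨C, hC, hrC⟩ := hr
  obtain ⟨t, ht, rfl⟩ := Multiset.mem_map.mp hrC
  have hle : C.val.map (supTup Q C) ≤ suppress Q S :=
    Finset.single_le_sum (f := fun C => C.val.map (supTup Q C))
      (fun _ _ => Multiset.zero_le _) hC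
  have hfil : ((C.val.map (supTup Q C)).filter
      fun s => ∀ A ∈ Q, s A = supTup Q C t A) = C.val.map (supTup Q C) := by
    refine Multiset.filter_eq_self.mpr ?_
    intro x hx
    obtain ⟨t', ht', rfl⟩ := Multiset.mem_map.mp hx
    intro A hA
    exact supTup_agree Q C ht ht' hA
  calc k ≤ C.card := hsize C hC
    _ = ((C.val.map (supTup Q C)).filter
        fun s => ∀ A ∈ Q, s A = supTup Q C t A).card := by
        rw [hfil, Multiset.card_map]; rfl
    _ ≤ _ := Multiset.card_le_card (Multiset.filter_le_filter _ hle)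
end

section
/- Let σ = (A[a], λ_l, λ_r) with λ_l ≥ k ≥ 1, and let m be the number of tuples of R with value a on A. If a clustering S consists of clusters each of which is a subset of the relevant tuples of σ (all with value a on A) and each of size in [k, 2k−1], and the total number of tuples across clusters is p with λ_l ≤ p ≤ λ_r, then Suppress(S) satisfies σ; such a clustering exists iff there exists p ∈ [λ_l, min(λ_r, m)] that can be written as a sum of integers each in [k, 2k−1]; in particular, a sufficient condition is λ_l ≤ m and the interval [λ_l, min(λ_r, m)] contains a multiple of k. -/
lemma supTup_apply_of_forall_eq {α V : Type*} [DecidableEq α] [DecidableEq V]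
    (Q : Finset α) {C : Finset (α → V)} {t : α → V} {A : α} (h : ∀ s ∈ C, s A = t A) :
    supTup Q C t A = some (t A) :=
  if_neg fun ⟨_, s, hs, hne⟩ => hne (h s hs)

/-- A cluster that agrees on `A` keeps its value there, so no tuple is lost to `⋆`. -/
lemma cntO_suppress_of_forall_eq {α V : Type*} [DecidableEq α] [DecidableEq V]
    (Q : Finset α) {S : Finset (Finset (α → V))} {A : α} {a : V}
    (h : ∀ C ∈ S, ∀ t ∈ C, t A = a) :
    cntO (suppress Q S) A a = ∑ C ∈ S, C.card := by
  have hall : ∀ r ∈ suppress Q S, r A = some a := by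
    intro r hr
    obtain ⟨C, hC, hr⟩ := Multiset.mem_sum.mp hr
    obtain ⟨t, ht, rfl⟩ := Multiset.mem_map.mp hr
    rw [supTup_apply_of_forall_eq Q fun s hs => (h C hC s hs).trans (h C hC t ht).symm,
      h C hC t ht]
  rw [cntO, Multiset.filter_eq_self.mpr hall, suppress, Multiset.card_sum]
  simp only [Multiset.card_map, Finset.card_val]

lemma Finset.sum_card_le_of_pairwiseDisjoint {β : Type*} [DecidableEq β]
    {S : Finset (Finset β)} {T : Finset β} (hS : (S : Set (Finset β)).PairwiseDisjoint id)
    (hST : ∀ C ∈ S, C ⊆ T) :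
    ∑ C ∈ S, C.card ≤ T.card := by
  calc ∑ C ∈ S, C.card = (S.biUnion id).card := (Finset.card_biUnion hS).symm
    _ ≤ T.card := Finset.card_le_card (Finset.biUnion_subset.mpr hST)

lemma Finset.exists_pairwiseDisjoint_subsets_of_sum_le {β : Type*} [DecidableEq β]
    (l : Multiset ℕ) (T : Finset β) (hl : l.sum ≤ T.card) :
    ∃ S : Finset (Finset β), (S : Set (Finset β)).PairwiseDisjoint id ∧
      (∀ C ∈ S, C ⊆ T ∧ C.card ∈ l) ∧ ∑ C ∈ S, C.card = l.sum := by
  induction l using Multiset.induction generalizing T with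
  | empty => exact ⟨∅, by simp, by simp, by simp⟩
  | cons n l ih =>
    rw [Multiset.sum_cons] at hl
    obtain ⟨s, hsT, hs⟩ := Finset.exists_subset_card_eq (n.le_add_right _ |>.trans hl)
    obtain ⟨S, hS, hST, hsum⟩ :=
      ih (T \ s) (by rw [Finset.card_sdiff_of_subset hsT, hs]; omega)
    have hST' : ∀ C ∈ S, C ⊆ T ∧ C.card ∈ n ::ₘ l := fun C hC =>
      ⟨(hST C hC).1.trans Finset.sdiff_subset, Multiset.mem_cons_of_mem (hST C hC).2⟩
    by_cases hsS : s ∈ S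
    · -- `s ⊆ T \ s` forces `s = ∅`, so `n = 0` and `S` already works
      have hs0 : s = ∅ := disjoint_self.mp (Finset.subset_sdiff.mp (hST s hsS).1).2
      subst hs0
      exact ⟨S, hS, hST', by rw [hsum, Multiset.sum_cons, ← hs, Finset.card_empty, zero_add]⟩
    · refine ⟨insert s S, ?_, ?_, ?_⟩
      · rw [Finset.coe_insert]
        exact hS.insert fun C hC _ =>
          Finset.disjoint_of_subset_right (hST C hC).1 Finset.disjoint_sdiff
      · simpa only [Finset.forall_mem_insert, hs] using
          ⟨⟨hsT, Multiset.mem_cons_self n l⟩, hST'⟩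
      · rw [Finset.sum_insert hsS, hsum, hs, Multiset.sum_cons]

theorem diva_clustering_characterization_general {α V : Type*} [DecidableEq α] [DecidableEq V]
    (Q : Finset α) (R : Finset (α → V)) (A : α) (a : V) (lo hi k : ℕ) :
    (∀ S : Finset (Finset (α → V)),
       (∀ C ∈ S, C ⊆ R.filter (fun r => r A = a) ∧ k ≤ C.card ∧ C.card ≤ 2 * k - 1) →
       (∀ C ∈ S, ∀ C' ∈ S, C ≠ C' → Disjoint C C') →
       ∀ p, (∑ C ∈ S, C.card) = p → lo ≤ p → p ≤ hi →
       satO (suppress Q S) A a lo hi) ∧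
    ((∃ S : Finset (Finset (α → V)),
       (∀ C ∈ S, C ⊆ R.filter (fun r => r A = a) ∧ k ≤ C.card ∧ C.card ≤ 2 * k - 1) ∧
       (∀ C ∈ S, ∀ C' ∈ S, C ≠ C' → Disjoint C C') ∧
       lo ≤ (∑ C ∈ S, C.card) ∧ (∑ C ∈ S, C.card) ≤ hi) ↔
     (∃ p, lo ≤ p ∧ p ≤ min hi (R.filter (fun r => r A = a)).card ∧
       ∃ l : Multiset ℕ, (∀ x ∈ l, k ≤ x ∧ x ≤ 2 * k - 1) ∧ l.sum = p)) ∧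
    ((lo ≤ (R.filter (fun r => r A = a)).card ∧
       ∃ q, lo ≤ q * k ∧ q * k ≤ min hi (R.filter (fun r => r A = a)).card) →
     (∃ p, lo ≤ p ∧ p ≤ min hi (R.filter (fun r => r A = a)).card ∧
       ∃ l : Multiset ℕ, (∀ x ∈ l, k ≤ x ∧ x ≤ 2 * k - 1) ∧ l.sum = p)) := by
  classical
  refine ⟨fun S hS _ p hp hlop hphi => ?_, ⟨?_, ?_⟩, ?_⟩
  · have hval : ∀ C ∈ S, ∀ t ∈ C, t A = a := fun C hC t ht =>
      (Finset.mem_filter.mp ((hS C hC).1 ht)).2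
    rw [satO, cntO_suppress_of_forall_eq Q hval, hp]
    exact ⟨hlop, hphi⟩
  · rintro ⟨S, hS, hdisj, hlop, hphi⟩
    have hm := Finset.sum_card_le_of_pairwiseDisjoint
      (fun C hC C' hC' => hdisj C hC C' hC') fun C hC => (hS C hC).1
    refine ⟨_, hlop, le_min hphi hm, S.val.map Finset.card, fun x hx => ?_,
      Finset.sum_map_val _ _⟩
    obtain ⟨C, hC, rfl⟩ := Multiset.mem_map.mp hx
    exact (hS C hC).2
  · rintro ⟨p, hlop, hpm, l, hl, rfl⟩
    obtain ⟨S, hdisj, hS, hsum⟩ :=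
      Finset.exists_pairwiseDisjoint_subsets_of_sum_le l _ (hpm.trans (min_le_right _ _))
    refine ⟨S, fun C hC => ⟨(hS C hC).1, hl _ (hS C hC).2⟩,
      fun C hC C' hC' => hdisj hC hC', ?_, ?_⟩ <;> rw [hsum]
    · exact hlop
    · exact hpm.trans (min_le_left _ _)
  · rintro ⟨-, q, hlq, hqm⟩
    refine ⟨q * k, hlq, hqm, Multiset.replicate q k, fun x hx => ?_, ?_⟩
    · rw [Multiset.eq_of_mem_replicate hx]
      omega
    · rw [Multiset.sum_replicate, smul_eq_mul]

/-- Clustering within the relevant tuples of `σ = (A[a], lo, hi)`: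
(a) soundness: clusters inside the relevant set with sizes in `[k, 2k-1]` and
total `p ∈ [lo, hi]` yield a suppressed relation satisfying `σ`;
(b) existence of such a clustering iff some `p ∈ [lo, min hi m]` is a sum of
integers in `[k, 2k-1]` (with `m` the frequency of `a`);
(c) sufficiency: `lo ≤ m` and a multiple of `k` in `[lo, min hi m]`. -/
theorem diva_clustering_characterization {α V : Type*} [DecidableEq α] [DecidableEq V]
    (Q : Finset α) (R : Finset (α → V)) (A : α) (a : V) (lo hi k : ℕ)
    (hk : 1 ≤ k) (hlo : k ≤ lo) :
    (∀ S : Finset (Finset (α → V)),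
       (∀ C ∈ S, C ⊆ R.filter (fun r => r A = a) ∧ k ≤ C.card ∧ C.card ≤ 2 * k - 1) →
       (∀ C ∈ S, ∀ C' ∈ S, C ≠ C' → Disjoint C C') →
       ∀ p, (∑ C ∈ S, C.card) = p → lo ≤ p → p ≤ hi →
       satO (suppress Q S) A a lo hi) ∧
    ((∃ S : Finset (Finset (α → V)),
       (∀ C ∈ S, C ⊆ R.filter (fun r => r A = a) ∧ k ≤ C.card ∧ C.card ≤ 2 * k - 1) ∧
       (∀ C ∈ S, ∀ C' ∈ S, C ≠ C' → Disjoint C C') ∧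
       lo ≤ (∑ C ∈ S, C.card) ∧ (∑ C ∈ S, C.card) ≤ hi) ↔
     (∃ p, lo ≤ p ∧ p ≤ min hi (R.filter (fun r => r A = a)).card ∧
       ∃ l : Multiset ℕ, (∀ x ∈ l, k ≤ x ∧ x ≤ 2 * k - 1) ∧ l.sum = p)) ∧
    ((lo ≤ (R.filter (fun r => r A = a)).card ∧
       ∃ q, lo ≤ q * k ∧ q * k ≤ min hi (R.filter (fun r => r A = a)).card) →
     (∃ p, lo ≤ p ∧ p ≤ min hi (R.filter (fun r => r A = a)).card ∧
       ∃ l : Multiset ℕ, (∀ x ∈ l, k ≤ x ∧ x ≤ 2 * k - 1) ∧ l.sum = p)) :=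
  diva_clustering_characterization_general Q R A a lo hi k
end
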